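/- arXiv:1905.04007 — 2 statements merged into one kernel-verified Lean document; each statement's English description precedes it below -/
import Mathlib

section
/- Let 0 < d < 1 and T_n, T_m > 0, and set the EH times to their duty-cycle maxima τ_n = ((1−d)/d)·T_n and τ_m = ((1−d)/d)·T_m. Assume that whenever T_n ≠ T_m one has min(T_n, T_m) ≤ (1−d)·max(T_n, T_m). Then the collision time simplifies to: col(n,m) = 0 if T_n ≠ T_m, and col(n,m) = T_n if T_n = T_m. In particular, users with different times on air (different spreading factors) do not collide in the time domain. -/
/-! The transmission of a user with time on air `T` at maximal EH time occupies
`[((1-d)/d)·T, T/d]`. For `Tₙ < Tₘ` the separation condition `Tₙ ≤ (1-d)·Tₘ`, divided by `d`,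
says exactly that the first interval ends before the second one starts. -/

def collisionTime (τn Tn τm Tm : ℝ) : ℝ :=
  max 0 (min (τn + Tn) (τm + Tm) - max τn τm)

lemma collisionTime_comm (τn Tn τm Tm : ℝ) :
    collisionTime τn Tn τm Tm = collisionTime τm Tm τn Tn := by
  rw [collisionTime, collisionTime, min_comm, max_comm τn]

lemma collisionTime_self (τ : ℝ) {T : ℝ} (hT : 0 ≤ T) : collisionTime τ T τ T = T := by
  rw [collisionTime, min_self, max_self, add_sub_cancel_left, max_eq_right hT]

lemma collisionTime_eq_zero_of_add_le {τn Tn τm Tm : ℝ} (h : τn + Tn ≤ τm) :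
    collisionTime τn Tn τm Tm = 0 :=
  max_eq_left <| sub_nonpos.2 <| (min_le_left _ _).trans <| h.trans (le_max_right _ _)

lemma maxEHTime_add_le_maxEHTime {d T T' : ℝ} (hd : 0 < d) (h : T ≤ (1 - d) * T') :
    (1 - d) / d * T + T ≤ (1 - d) / d * T' := by
  have hend : (1 - d) / d * T + T = T / d := by field_simp; ring
  rw [hend, div_mul_eq_mul_div, div_le_div_iff_of_pos_right hd]
  linarith

lemma collisionTime_maxEHTime_eq_zero {d T T' : ℝ} (hd : 0 < d) (h : T ≤ (1 - d) * T') :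
    collisionTime ((1 - d) / d * T) T ((1 - d) / d * T') T' = 0 :=
  collisionTime_eq_zero_of_add_le (maxEHTime_add_le_maxEHTime hd h)

theorem collision_time_max_EH_time_general
    (d Tn Tm : ℝ) (hd0 : 0 < d)
    (hTn : 0 < Tn)
    (hsep : Tn ≠ Tm → min Tn Tm ≤ (1 - d) * max Tn Tm)
    (τn τm : ℝ)
    (hτn : τn = ((1 - d) / d) * Tn) (hτm : τm = ((1 - d) / d) * Tm) :
    (Tn ≠ Tm → max 0 (min (τn + Tn) (τm + Tm) - max τn τm) = 0) ∧
    (Tn = Tm → max 0 (min (τn + Tn) (τm + Tm) - max τn τm) = Tn) := by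
  subst hτn hτm
  refine ⟨fun hne => ?_, fun heq => ?_⟩
  · have hsep := hsep hne
    rcases hne.lt_or_gt with hlt | hgt
    · rw [min_eq_left hlt.le, max_eq_right hlt.le] at hsep
      exact collisionTime_maxEHTime_eq_zero hd0 hsep
    · rw [min_eq_right hgt.le, max_eq_left hgt.le] at hsep
      rw [← collisionTime, collisionTime_comm]
      exact collisionTime_maxEHTime_eq_zero hd0 hsep
  · subst heq
    exact collisionTime_self _ hTn.le

/-- With the EH times set to their duty-cycle maxima `τ = ((1−d)/d)·T`, and
under the separation condition `min Tₙ Tₘ ≤ (1−d)·max Tₙ Tₘ` whenever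
`Tₙ ≠ Tₘ`, the collision time is `0` when the times on air differ and `Tₙ`
when they coincide: users with different spreading factors do not collide. -/
theorem collision_time_max_EH_time
    (d Tn Tm : ℝ) (hd0 : 0 < d) (hd1 : d < 1)
    (hTn : 0 < Tn) (hTm : 0 < Tm)
    (hsep : Tn ≠ Tm → min Tn Tm ≤ (1 - d) * max Tn Tm)
    (τn τm : ℝ)
    (hτn : τn = ((1 - d) / d) * Tn) (hτm : τm = ((1 - d) / d) * Tm) :
    (Tn ≠ Tm → max 0 (min (τn + Tn) (τm + Tm) - max τn τm) = 0) ∧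
    (Tn = Tm → max 0 (min (τn + Tn) (τm + Tm) - max τn τm) = Tn) :=
  collision_time_max_EH_time_general d Tn Tm hd0 hTn hsep τn τm hτn hτm
end

section
/- Let g > 0, σ² > 0, P_t > 0, E > 0, T > 0, d ∈ (0,1), δ₁ = ((1−d)/d)·T, and δ₂ = min(P_t·T/E, δ₁). Suppose the aggregate interference I : ℝ → ℝ is nonnegative and nondecreasing on [δ₂, δ₁]. Define R(τ) = log(1 + min(P_t, τ·E/T)·g / (I(τ) + σ²)). Then the restriction of R to [δ₂, δ₁] attains its maximum at τ = δ₂, i.e. R(τ) ≤ R(δ₂) for all τ ∈ [δ₂, δ₁]. -/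
/-! The harvested power `min Pt (τ E / T)` is nondecreasing in `τ` and is already saturated
at `τ = min (Pt T / E) δ₁`, so on `[δ₂, δ₁]` it never exceeds its value at `δ₂`, while the
interference never falls below its value there. Both effects lower the SINR, and `log (1 + ·)`
is increasing. -/

open Real

section HarvestedPower

variable {Pt E T : ℝ}

noncomputable def harvestedPower (Pt E T τ : ℝ) : ℝ := min Pt (τ * E / T)

lemma harvestedPower_nonneg (hPt : 0 ≤ Pt) (hE : 0 ≤ E) (hT : 0 ≤ T) {τ : ℝ} (hτ : 0 ≤ τ) :
    0 ≤ harvestedPower Pt E T τ :=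
  le_min hPt (by positivity)

lemma harvestedPower_monotone (hE : 0 ≤ E) (hT : 0 ≤ T) : Monotone (harvestedPower Pt E T) :=
  fun _ _ h => min_le_min_left Pt (by gcongr)

lemma harvestedPower_min_saturation (hE : 0 < E) (hT : 0 < T) (δ : ℝ) :
    harvestedPower Pt E T (min (Pt * T / E) δ) = harvestedPower Pt E T δ := by
  have hscale : Monotone fun τ : ℝ => τ * E / T := fun _ _ h => by dsimp only; gcongr
  have hsat : Pt * T / E * E / T = Pt := by field_simp
  simp only [harvestedPower, hscale.map_min, hsat, ← min_assoc, min_self]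

end HarvestedPower

lemma log_one_add_div_le_log_one_add_div {a a' b b' : ℝ} (ha : 0 ≤ a) (haa' : a ≤ a')
    (hb' : 0 < b') (hbb' : b' ≤ b) : log (1 + a / b) ≤ log (1 + a' / b') := by
  have hb : 0 < b := hb'.trans_le hbb'
  have ha' : 0 ≤ a' := ha.trans haa'
  apply log_le_log (by positivity)
  gcongr

/-- If the aggregate interference `I` is nonnegative and nondecreasing on
`[δ₂, δ₁]`, the rate `R(τ) = log (1 + min Pₜ (τE/T) · g / (I τ + σ²))`
restricted to `[δ₂, δ₁]` attains its maximum at `τ = δ₂`. -/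
theorem optimal_EH_time_nondecreasing_interference
    (g σ2 Pt E T d : ℝ)
    (hg : 0 < g) (hσ : 0 < σ2) (hPt : 0 < Pt) (hE : 0 < E) (hT : 0 < T)
    (hd0 : 0 < d) (hd1 : d < 1)
    (δ1 δ2 : ℝ) (hδ1 : δ1 = ((1 - d) / d) * T) (hδ2 : δ2 = min (Pt * T / E) δ1)
    (I : ℝ → ℝ)
    (hInonneg : ∀ τ ∈ Set.Icc δ2 δ1, 0 ≤ I τ)
    (hImono : MonotoneOn I (Set.Icc δ2 δ1))
    (R : ℝ → ℝ)
    (hR : ∀ τ : ℝ, R τ = Real.log (1 + min Pt (τ * E / T) * g / (I τ + σ2))) :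
    ∀ τ ∈ Set.Icc δ2 δ1, R τ ≤ R δ2 := by
  intro τ hτ
  have hδ1_nonneg : 0 ≤ δ1 := hδ1 ▸ mul_nonneg (div_nonneg (by linarith) hd0.le) hT.le
  have hδ2_nonneg : 0 ≤ δ2 := hδ2 ▸ le_min (by positivity) hδ1_nonneg
  have hδ2_mem : δ2 ∈ Set.Icc δ2 δ1 := ⟨le_rfl, hτ.1.trans hτ.2⟩
  have hpower : harvestedPower Pt E T τ ≤ harvestedPower Pt E T δ2 := by
    rw [hδ2, harvestedPower_min_saturation hE hT]
    exact harvestedPower_monotone hE.le hT.le hτ.2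
  rw [hR, hR]
  apply log_one_add_div_le_log_one_add_div
  · exact mul_nonneg (harvestedPower_nonneg hPt.le hE.le hT.le (hδ2_nonneg.trans hτ.1)) hg.le
  · exact mul_le_mul_of_nonneg_right hpower hg.le
  · linarith [hInonneg δ2 hδ2_mem]
  · linarith [hImono hδ2_mem hτ hτ.1]
end
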